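/- arXiv:1112.2861 — 2 statements merged into one kernel-verified Lean document; each statement's English description precedes it below -/
import Mathlib

section
/- Let χ be a simple game on n voters in which every losing coalition has cardinality at most k. Then μ(χ) ≤ max(1, k/2); that is, χ is max(1, k/2)-roughly weighted. -/
open Finset

/-- `f` is `α`-roughly weighted: there are real weights such that every winning
coalition has weight at least `1` and every losing coalition weight at most `α`. -/
def RoughlyWeighted {n : ℕ} (f : Finset (Fin n) → Bool) (α : ℝ) : Prop :=
  ∃ w : Fin n → ℝ,
    (∀ S : Finset (Fin n), f S = true → 1 ≤ ∑ i ∈ S, w i) ∧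
    (∀ S : Finset (Fin n), f S = false → ∑ i ∈ S, w i ≤ α)

/-- The critical threshold value `μ(f)`: the smallest `α ≥ 1` such that `f` is
`α`-roughly weighted. -/
noncomputable def mu {n : ℕ} (f : Finset (Fin n) → Bool) : ℝ :=
  sInf {α : ℝ | 1 ≤ α ∧ RoughlyWeighted f α}

/-- A simple game: monotone, the empty coalition loses and the grand coalition wins. -/
def SimpleGame {n : ℕ} (χ : Finset (Fin n) → Bool) : Prop :=
  χ ∅ = false ∧ χ Finset.univ = true ∧
    ∀ S T : Finset (Fin n), S ⊆ T → χ S = true → χ T = true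

/-
Give weight `1` to every voter who wins alone and weight `1/2` to everyone else. A winning
coalition either contains such a voter or has at least two members, so it weighs at least `1`.
By monotonicity a losing coalition contains no voter who wins alone, so it weighs half its
cardinality, at most `k/2`.
-/

theorem mu_le_of_roughlyWeighted {n : ℕ} {f : Finset (Fin n) → Bool} {α : ℝ} (hα : 1 ≤ α)
    (hf : RoughlyWeighted f α) : mu f ≤ α :=
  csInf_le ⟨1, fun _ h => h.1⟩ ⟨hα, hf⟩

section SoloWeight

variable {n : ℕ} (χ : Finset (Fin n) → Bool)

noncomputable def soloWeight (i : Fin n) : ℝ := if χ {i} = true then 1 else 1 / 2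

theorem half_le_soloWeight (i : Fin n) : 1 / 2 ≤ soloWeight χ i := by
  unfold soloWeight; split_ifs <;> norm_num

theorem soloWeight_of_lose_singleton {i : Fin n} (hi : χ {i} = false) :
    soloWeight χ i = 1 / 2 := by
  simp [soloWeight, hi]

theorem one_le_sum_soloWeight (hempty : χ ∅ = false) {S : Finset (Fin n)} (hS : χ S = true) :
    1 ≤ ∑ i ∈ S, soloWeight χ i := by
  by_cases hsolo : ∃ i ∈ S, χ {i} = true
  · obtain ⟨i, hiS, hi⟩ := hsolo
    calc (1 : ℝ) = soloWeight χ i := by simp [soloWeight, hi]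
      _ ≤ ∑ j ∈ S, soloWeight χ j :=
        single_le_sum (fun j _ => (half_le_soloWeight χ j).trans' (by norm_num)) hiS
  · have hcard : 2 ≤ S.card := by
      by_contra! h
      interval_cases hc : S.card
      · rw [card_eq_zero.mp hc, hempty] at hS
        exact Bool.false_ne_true hS
      · obtain ⟨i, rfl⟩ := card_eq_one.mp hc
        exact hsolo ⟨i, mem_singleton_self i, hS⟩
    have hcard' : (2 : ℝ) ≤ S.card := by exact_mod_cast hcard
    calc (1 : ℝ) ≤ S.card • (1 / 2 : ℝ) := by rw [nsmul_eq_mul]; linarith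
      _ ≤ ∑ i ∈ S, soloWeight χ i := card_nsmul_le_sum _ _ _ fun i _ => half_le_soloWeight χ i

theorem sum_soloWeight_of_lose
    (hmono : ∀ S T : Finset (Fin n), S ⊆ T → χ S = true → χ T = true)
    {S : Finset (Fin n)} (hS : χ S = false) :
    ∑ i ∈ S, soloWeight χ i = S.card / 2 := by
  have hhalf : ∀ i ∈ S, soloWeight χ i = 1 / 2 := fun i hi =>
    soloWeight_of_lose_singleton χ <| Bool.eq_false_iff.mpr fun h =>
      Bool.false_ne_true (hS ▸ hmono {i} S (singleton_subset_iff.mpr hi) h)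
  rw [sum_congr rfl hhalf, sum_const, nsmul_eq_mul]
  ring

end SoloWeight

/-- if every losing coalition of a simple game has cardinality at
most `k`, then the game is `max(1, k/2)`-roughly weighted, so `μ(χ) ≤ max(1, k/2)`. -/
theorem critical_threshold_le_max_one_half_k (n k : ℕ)
    (χ : Finset (Fin n) → Bool) (hχ : SimpleGame χ)
    (hlose : ∀ S : Finset (Fin n), χ S = false → S.card ≤ k) :
    mu χ ≤ max 1 ((k : ℝ) / 2) ∧ RoughlyWeighted χ (max 1 ((k : ℝ) / 2)) := by
  obtain ⟨hempty, -, hmono⟩ := hχ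
  have hrw : RoughlyWeighted χ (max 1 ((k : ℝ) / 2)) := by
    refine ⟨soloWeight χ, fun S hS => one_le_sum_soloWeight χ hempty hS, fun S hS => ?_⟩
    rw [sum_soloWeight_of_lose χ hmono hS]
    have hcard : (S.card : ℝ) ≤ k := by exact_mod_cast hlose S hS
    exact le_max_of_le_right (by linarith)
  exact ⟨mu_le_of_roughlyWeighted (le_max_left _ _) hrw, hrw⟩
end

section
/- For every integer n ≥ 3, every simple game χ on n voters satisfies μ(χ) ≤ n/3; that is, every simple game on n voters is (n/3)-roughly weighted. -/
/-!
Let `L` be a losing coalition of maximal size `m`. If `m ≥ 2n/3`, give weight `1` to the voters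
outside `L` and `0` to those in `L`: no winning coalition fits inside `L`, and every coalition
weighs at most `n - m ≤ n/3`. Otherwise give weight `1` to the voters who win alone and `1/2` to
the others: a winning coalition contains such a voter or has at least two members, while a losing
coalition contains none of them and so weighs `#S/2 ≤ m/2 < n/3`.
-/

open Finset

section RoughlyWeighted

variable {n : ℕ} {f : Finset (Fin n) → Bool}

theorem RoughlyWeighted.mono {α β : ℝ} (hαβ : α ≤ β) (h : RoughlyWeighted f α) :
    RoughlyWeighted f β :=
  let ⟨w, hwin, hlose⟩ := h
  ⟨w, hwin, fun S hS => (hlose S hS).trans hαβ⟩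

theorem RoughlyWeighted.mu_le {α : ℝ} (hα : 1 ≤ α) (h : RoughlyWeighted f α) : mu f ≤ α :=
  csInf_le ⟨1, fun _ hβ => hβ.1⟩ ⟨hα, h⟩

theorem roughlyWeighted_of_forall_not_subset (L : Finset (Fin n))
    (hL : ∀ S, f S = true → ¬ S ⊆ L) : RoughlyWeighted f (n - #L) := by
  refine ⟨fun i => if i ∈ Lᶜ then 1 else 0, fun S hS => ?_, fun S _ => ?_⟩
  · obtain ⟨i, hiS, hiL⟩ := not_subset.mp (hL S hS)
    rw [sum_boole, Nat.one_le_cast, one_le_card]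
    exact ⟨i, mem_filter.mpr ⟨hiS, mem_compl.mpr hiL⟩⟩
  · rw [sum_boole, ← Nat.cast_sub (card_le_univ L |>.trans_eq (Fintype.card_fin n)), Nat.cast_le]
    exact (card_le_card fun i hi => (mem_filter.mp hi).2).trans_eq
      (by rw [card_compl, Fintype.card_fin])

theorem roughlyWeighted_half (m : ℕ)
    (hwin : ∀ S, f S = true → (∃ i ∈ S, f {i} = true) ∨ 2 ≤ #S)
    (hlose : ∀ S, f S = false → ∀ i ∈ S, f {i} = false)
    (hcard : ∀ S, f S = false → #S ≤ m) : RoughlyWeighted f (m / 2) := by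
  set w : Fin n → ℝ := fun i => if f {i} = true then 1 else 1 / 2
  have sum_of_forall_false {S : Finset (Fin n)} (hS : ∀ i ∈ S, f {i} = false) :
      ∑ i ∈ S, w i = #S / 2 := by
    rw [sum_congr rfl fun i hi => if_neg (by simp [hS i hi]), sum_const, nsmul_eq_mul]
    ring
  refine ⟨w, fun S hS => ?_, fun S hS => ?_⟩
  · by_cases hpass : ∃ i ∈ S, f {i} = true
    · obtain ⟨i, hiS, hi⟩ := hpass
      have hw : ∀ j ∈ S, 0 ≤ w j := fun j _ => by unfold w; split_ifs <;> norm_num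
      simpa [w, hi] using single_le_sum hw hiS
    · have h2 : (2 : ℝ) ≤ #S := by exact_mod_cast (hwin S hS).resolve_left hpass
      rw [sum_of_forall_false fun i hi => Bool.eq_false_iff.mpr fun h => hpass ⟨i, hi, h⟩]
      linarith
  · rw [sum_of_forall_false (hlose S hS)]
    have : (#S : ℝ) ≤ m := by exact_mod_cast hcard S hS
    linarith

end RoughlyWeighted

namespace SimpleGame

variable {n : ℕ} {χ : Finset (Fin n) → Bool}

theorem exists_losing_max_card (hχ : SimpleGame χ) :
    ∃ L, χ L = false ∧ ∀ S, χ S = false → #S ≤ #L := by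
  obtain ⟨L, hL, hmax⟩ := exists_max_image (univ.filter fun S => χ S = false) card
    ⟨∅, by simp [hχ.1]⟩
  exact ⟨L, (mem_filter.mp hL).2, fun S hS => hmax S (by simp [hS])⟩

theorem not_subset_of_losing (hχ : SimpleGame χ) {L S : Finset (Fin n)} (hL : χ L = false)
    (hS : χ S = true) : ¬ S ⊆ L :=
  fun hSL => by simp [hχ.2.2 S L hSL hS] at hL

theorem singleton_losing (hχ : SimpleGame χ) {S : Finset (Fin n)} (hS : χ S = false)
    {i : Fin n} (hi : i ∈ S) : χ {i} = false := by
  simpa using mt (hχ.2.2 {i} S (singleton_subset_iff.mpr hi)) (by simp [hS])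

theorem exists_singleton_winning_or_two_le_card (hχ : SimpleGame χ) {S : Finset (Fin n)}
    (hS : χ S = true) : (∃ i ∈ S, χ {i} = true) ∨ 2 ≤ #S := by
  by_contra! h
  obtain ⟨hpass, hsmall⟩ := h
  interval_cases hcard : #S
  · simp [card_eq_zero.mp hcard, hχ.1] at hS
  · obtain ⟨i, rfl⟩ := card_eq_one.mp hcard
    simp [hS] at hpass

end SimpleGame

/-- every simple game on `n ≥ 3` voters is `(n/3)`-roughly weighted,
i.e. `c_S(n) ≤ n/3`. -/
theorem critical_threshold_le_third (n : ℕ) (hn : 3 ≤ n)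
    (χ : Finset (Fin n) → Bool) (hχ : SimpleGame χ) :
    mu χ ≤ (n : ℝ) / 3 ∧ RoughlyWeighted χ ((n : ℝ) / 3) := by
  obtain ⟨L, hL, hmax⟩ := hχ.exists_losing_max_card
  have hrw : RoughlyWeighted χ ((n : ℝ) / 3) := by
    rcases le_or_gt (2 * n : ℝ) (3 * #L) with hbig | hsmall
    · exact (roughlyWeighted_of_forall_not_subset L
        fun S hS => hχ.not_subset_of_losing hL hS).mono (by linarith)
    · exact (roughlyWeighted_half #L (fun S => hχ.exists_singleton_winning_or_two_le_card)
        (fun S => hχ.singleton_losing) hmax).mono (by linarith)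
  have h3 : (3 : ℝ) ≤ n := by exact_mod_cast hn
  exact ⟨hrw.mu_le (by linarith), hrw⟩
end
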